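/- For r-Dyck paths of size n, define iInv(μ) as the number of unit squares between μ and the top path 0^n 1^{rn}. Then ∑_{μ} q^{iInv(μ)} = C_n^{(r)}(q), where C_n^{(r)}(q) satisfies the recurrence C'_n(q) = ∑_{l_0+...+l_r = n-1} C'_{l_0}(q)···C'_{l_r}(q) q^{∑_{j=1}^r j·l_j} after the substitution C_n^{(r)}(q) = q^{r·binom(n,2)} C'_n(q^{-1}). -/

import Mathlib

open Finset Polynomial

open scoped Classical in
/-- An `r`-Dyck path of size `n`: a word with `n` zeros (`false`) and `r*n` ones
(`true`), every prefix having at most `r` times as many ones as zeros. -/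
def IsRDyck (r n : ℕ) (w : Fin ((r + 1) * n) → Bool) : Prop :=
  (univ.filter (fun i => w i = false)).card = n ∧
  ∀ k : ℕ,
    (univ.filter (fun i : Fin ((r + 1) * n) => (i : ℕ) < k ∧ w i = true)).card ≤
      r * (univ.filter (fun i : Fin ((r + 1) * n) => (i : ℕ) < k ∧ w i = false)).card

open scoped Classical in
/-- `iInv(μ)`: the number of unit squares between the path `μ` and the top path
`0^n 1^{rn}`, i.e. the number of pairs of positions `i < j` with `μ_i = 1` and
`μ_j = 0`. -/
def iInv {m : ℕ} (w : Fin m → Bool) : ℕ :=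
  (univ.filter (fun p : Fin m × Fin m => p.1 < p.2 ∧ w p.1 = true ∧ w p.2 = false)).card

/-- The `q`-Fuss–Catalan polynomial `C'_n(q)`, defined by the recurrence
`C'_n(q) = ∑_{l_0+⋯+l_r = n-1} C'_{l_0}(q) ⋯ C'_{l_r}(q) q^{∑_{j=1}^{r} j·l_j}`,
with `C'_0 = 1`. -/
noncomputable def fussCarlitz (r : ℕ) : ℕ → Polynomial ℕ
  | 0 => 1
  | n + 1 =>
    ∑ l ∈ (Finset.Nat.antidiagonalTuple (r + 1) n).attach,
      (∏ i : Fin (r + 1), fussCarlitz r (l.1 i)) *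
        X ^ (∑ i : Fin (r + 1), (i : ℕ) * l.1 i)
  decreasing_by
    have h := Finset.Nat.mem_antidiagonalTuple.mp l.2
    have : l.1 i ≤ n := by
      calc l.1 i ≤ ∑ j, l.1 j := Finset.single_le_sum (fun _ _ => Nat.zero_le _) (mem_univ i)
        _ = n := h
    omega

/-- `revAt D p = q^D · p(q⁻¹)` for a polynomial `p` of degree at most `D`:
the reversal of the coefficient sequence of `p` with respect to degree `D`. -/
noncomputable def revAt (D : ℕ) (p : Polynomial ℕ) : Polynomial ℕ :=
  ∑ i ∈ Finset.range (D + 1), C (p.coeff (D - i)) * X ^ i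

/-!
Read `0` as a step up by `r` and `1` as a step down by `1`. Cutting an `r`-Dyck path of size
`n + 1` after its first step and at the first times it then reaches heights `r - 1, …, 0` gives
the unique factorisation `0 D_r 1 D_{r-1} 1 ⋯ 1 D_0` into `r`-Dyck paths `D_i` of sizes `m_i` with
`m_0 + ⋯ + m_r = n`. The factor `D_i` runs at height `i`, so the area `r·binom(n,2) - iInv` between
the path and the lowest path `(0 1^r)^n` is the sum of the areas of the `D_i` plus `∑ i·m_i`. This
is the recurrence of `C'_n`, hence `C'_n(q) = ∑ q^area`, and reversing with respect to
`r·binom(n,2)` gives the generating function of `iInv`.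
-/

namespace RDyck

open List

lemma choose_two_add (a b : ℕ) : (a + b).choose 2 = a.choose 2 + b.choose 2 + a * b := by
  simp [Nat.add_choose_eq, Finset.Nat.antidiagonal_succ]
  ring

lemma succ_choose_two (n : ℕ) : (n + 1).choose 2 = n.choose 2 + n := by
  simp [choose_two_add]

def inversions : List Bool → ℕ
  | [] => 0
  | b :: t => (if b then t.count false else 0) + inversions t

@[simp] lemma inversions_nil : inversions [] = 0 := rfl

@[simp] lemma inversions_cons (b : Bool) (t : List Bool) :
    inversions (b :: t) = (if b then t.count false else 0) + inversions t := rfl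

lemma inversions_append (u v : List Bool) :
    inversions (u ++ v) = inversions u + inversions v + u.count true * v.count false := by
  induction u with
  | nil => simp
  | cons b u ih => cases b <;> simp [ih]; ring

lemma card_filter_lt_eq_count_take {M : ℕ} (w : Fin M → Bool) (b : Bool) (k : ℕ) :
    #{i : Fin M | (i : ℕ) < k ∧ w i = b} = ((ofFn w).take k).count b := by
  induction M generalizing k with
  | zero => simp
  | succ M ih =>
    rw [Fin.card_filter_univ_succ', ofFn_succ]
    cases k with
    | zero => simp
    | succ k => simp [← ih (fun i => w i.succ), count_cons, add_comm]

lemma card_filter_eq_count {M : ℕ} (w : Fin M → Bool) (b : Bool) :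
    #{i : Fin M | w i = b} = (ofFn w).count b := by
  simpa [take_of_length_le] using card_filter_lt_eq_count_take w b M

lemma iInv_eq_inversions_ofFn {M : ℕ} (w : Fin M → Bool) : iInv w = inversions (ofFn w) := by
  induction M with
  | zero => simp [iInv]
  | succ M ih =>
    rw [ofFn_succ, inversions_cons, ← ih, ← card_filter_eq_count]
    simp only [iInv, Finset.card_filter, Fintype.sum_prod_type, Fin.sum_univ_succ]
    by_cases h : w 0 <;> simp [h, Fin.succ_pos]

lemma forall_prefix_iff_forall_take {α : Type*} {p : List α → Prop} {l : List α} :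
    (∀ q, q <+: l → p q) ↔ ∀ k, p (l.take k) :=
  ⟨fun h k => h _ (take_prefix k l), fun h _ hq => prefix_iff_eq_take.mp hq ▸ h _⟩

lemma prefix_or_eq_append_of_prefix_append {α : Type*} {q u v : List α} (h : q <+: u ++ v) :
    q <+: u ∨ ∃ q', q' <+: v ∧ q = u ++ q' := by
  obtain hqu | ⟨q', rfl⟩ := prefix_or_prefix_of_prefix h (prefix_append u v)
  · exact Or.inl hqu
  · exact Or.inr ⟨q', (prefix_append_right_inj u).mp h, rfl⟩

/-- Reading `false` as a step up by `r` and `true` as a step down by `1`, the path `l` started at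
height `k` never goes below height `0` and ends at height `0`. -/
def IsDyckFrom (r k : ℕ) (l : List Bool) : Prop :=
  (∀ q, q <+: l → q.count true ≤ r * q.count false + k) ∧ l.count true = r * l.count false + k

variable {r k : ℕ}

lemma isDyckFrom_false_cons {t : List Bool} : IsDyckFrom r 0 (false :: t) ↔ IsDyckFrom r r t := by
  simp only [IsDyckFrom, prefix_cons_iff, forall_eq_or_imp, forall_exists_index, and_imp]
  constructor
  · rintro ⟨⟨-, hpre⟩, htot⟩
    refine ⟨fun q hq => ?_, ?_⟩
    · have := hpre (false :: q) q rfl hq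
      simp at this; linarith
    · simp at htot; linarith
  · rintro ⟨hpre, htot⟩
    refine ⟨⟨by simp, ?_⟩, ?_⟩
    · rintro _ q rfl hq
      have := hpre q hq
      simp; linarith
    · simp; linarith

lemma not_isDyckFrom_zero_true_cons (t : List Bool) : ¬ IsDyckFrom r 0 (true :: t) := by
  intro h
  have := h.1 [true] (by simp)
  simp at this

lemma IsDyckFrom.append_true_cons {u v : List Bool} (hu : IsDyckFrom r 0 u)
    (hv : IsDyckFrom r k v) : IsDyckFrom r (k + 1) (u ++ true :: v) := by
  have hu_tot := hu.2
  refine ⟨fun q hq => ?_, ?_⟩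
  · obtain hq | ⟨q', hq', rfl⟩ := prefix_or_eq_append_of_prefix_append hq
    · have := hu.1 q hq
      omega
    · obtain rfl | ⟨q'', rfl, hq''⟩ := prefix_cons_iff.mp hq'
      · simp; omega
      · have := hv.1 q'' hq''
        simp [Nat.mul_add]; omega
  · have := hv.2
    simp [Nat.mul_add]; omega

/-- The factor `u` ends where the path first drops below its starting height. -/
lemma IsDyckFrom.exists_eq_append_true_cons {t : List Bool} (ht : IsDyckFrom r (k + 1) t) :
    ∃ u v, IsDyckFrom r 0 u ∧ IsDyckFrom r k v ∧ t = u ++ true :: v := by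
  suffices key : ∀ t' s : List Bool, (∀ q, q <+: s → q.count true ≤ r * q.count false) →
      IsDyckFrom r (k + 1) (s ++ t') →
      ∃ u v, IsDyckFrom r 0 u ∧ IsDyckFrom r k v ∧ s ++ t' = u ++ true :: v from
    key t [] (by simp) ht
  intro t'
  induction t' with
  | nil =>
    intro s hs ht
    have := hs s prefix_rfl
    have := ht.2
    simp at *; omega
  | cons b t ih =>
    intro s hs ht
    by_cases hsb : ∀ q, q <+: s ++ [b] → q.count true ≤ r * q.count false
    · simpa using ih (s ++ [b]) hsb (by simpa using ht)
    have hbal : s.count true = r * s.count false ∧ b = true := by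
      push Not at hsb
      obtain ⟨q, hq, hlt⟩ := hsb
      obtain rfl | hq := prefix_concat_iff.mp hq
      · have := hs s prefix_rfl
        cases b
        · simp [Nat.mul_add] at hlt; omega
        · simp at hlt; exact ⟨by omega, rfl⟩
      · exact absurd (hs q hq) (not_le.mpr hlt)
    obtain ⟨hbal, rfl⟩ := hbal
    refine ⟨s, t, ⟨fun q hq => by simpa using hs q hq, by simpa using hbal⟩,
      ⟨fun q hq => ?_, ?_⟩, rfl⟩
    · have := ht.1 (s ++ true :: q) (by simpa using hq)
      simp [Nat.mul_add] at this; omega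
    · have := ht.2
      simp [Nat.mul_add] at this; omega

lemma eq_of_append_true_cons_eq {u u' v v' : List Bool} (hu : IsDyckFrom r 0 u)
    (hu' : IsDyckFrom r 0 u') (h : u ++ true :: v = u' ++ true :: v') : u = u' ∧ v = v' := by
  suffices key : ∀ {u u' v v' : List Bool}, IsDyckFrom r 0 u → IsDyckFrom r 0 u' → u <+: u' →
      u ++ true :: v = u' ++ true :: v' → u = u' by
    have huu' : u = u' := by
      obtain hpre | hpre := prefix_or_prefix_of_prefix (h ▸ prefix_append u (true :: v))
        (prefix_append u' (true :: v'))
      · exact key hu hu' hpre h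
      · exact (key hu' hu hpre h.symm).symm
    subst huu'
    simpa using h
  intro u u' v v' hu hu' ⟨w, hw⟩ h
  subst hw
  cases w with
  | nil => simp
  | cons b w =>
    -- otherwise `u ++ [true]` would be a prefix of `u'` ending below height `0`
    obtain rfl : b = true := (by simpa using h.symm : b = true ∧ _).1
    have hpre := hu'.1 (u ++ [true]) (by simp)
    have hbal := hu.2
    simp at hpre hbal; omega

lemma inversions_le {l : List Bool} (h : ∀ q, q <+: l → q.count true ≤ r * q.count false) :
    inversions l ≤ r * (l.count false).choose 2 := by
  induction l using List.reverseRecOn with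
  | nil => simp
  | append_singleton l b ih =>
    have hl := ih fun q hq => h q (hq.trans (prefix_append l [b]))
    have hb := h l (prefix_append l [b])
    cases b <;> simp [inversions_append, succ_choose_two, Nat.mul_add] <;> omega

/-- `body Q = Q k ++ true :: Q (k - 1) ++ ⋯ ++ true :: Q 0`. -/
def body : {k : ℕ} → (Fin (k + 1) → List Bool) → List Bool
  | 0, Q => Q 0
  | _ + 1, Q => Q (Fin.last _) ++ true :: body (Fin.init Q)

lemma isDyckFrom_body {Q : Fin (k + 1) → List Bool} (hQ : ∀ i, IsDyckFrom r 0 (Q i)) :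
    IsDyckFrom r k (body Q) := by
  induction k with
  | zero => exact hQ 0
  | succ k ih => exact (hQ _).append_true_cons (ih fun _ => hQ _)

lemma IsDyckFrom.exists_body_eq {t : List Bool} (ht : IsDyckFrom r k t) :
    ∃ Q : Fin (k + 1) → List Bool, (∀ i, IsDyckFrom r 0 (Q i)) ∧ body Q = t := by
  induction k generalizing t with
  | zero => exact ⟨fun _ => t, fun _ => ht, rfl⟩
  | succ k ih =>
    obtain ⟨u, v, hu, hv, rfl⟩ := ht.exists_eq_append_true_cons
    obtain ⟨Q, hQ, rfl⟩ := ih hv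
    refine ⟨Fin.snoc Q u, Fin.lastCases (by simpa using hu) (fun i => by simpa using hQ i), ?_⟩
    simp [body]

lemma eq_of_body_eq {Q Q' : Fin (k + 1) → List Bool} (hQ : ∀ i, IsDyckFrom r 0 (Q i))
    (hQ' : ∀ i, IsDyckFrom r 0 (Q' i)) (h : body Q = body Q') : Q = Q' := by
  induction k with
  | zero => funext i; rwa [Fin.fin_one_eq_zero i]
  | succ k ih =>
    obtain ⟨hlast, hinit⟩ := eq_of_append_true_cons_eq (hQ _) (hQ' _) h
    have hinit' : Fin.init Q = Fin.init Q' := ih (fun _ => hQ _) (fun _ => hQ' _) hinit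
    rw [← Fin.snoc_init_self Q, ← Fin.snoc_init_self Q', hinit', hlast]

lemma count_false_body (Q : Fin (k + 1) → List Bool) :
    (body Q).count false = ∑ i, (Q i).count false := by
  induction k with
  | zero => simp [body]
  | succ k ih => simp [body, ih, Fin.sum_univ_castSucc, Fin.init, add_comm]

-- The excess of `inversions (body Q)` over `∑ i, inversions (Q i)`, with the terms moved so that
-- no subtraction occurs.
lemma inversions_body {Q : Fin (k + 1) → List Bool}
    (hQ : ∀ i, (Q i).count true = r * (Q i).count false) :
    inversions (body Q) + ∑ i, r * ((Q i).count false).choose 2 +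
        ∑ i : Fin (k + 1), (i : ℕ) * (Q i).count false =
      ∑ i, inversions (Q i) + r * (∑ i, (Q i).count false).choose 2 +
        k * ∑ i, (Q i).count false := by
  induction k with
  | zero => simp [body]
  | succ k ih =>
    have ih' := ih (Q := Fin.init Q) (fun _ => hQ _)
    simp only [Fin.init] at ih'
    simp only [body, inversions_append, inversions_cons, if_true,
      count_cons_of_ne (by decide : true ≠ false), count_false_body, hQ (Fin.last _),
      Fin.sum_univ_castSucc (n := k + 1), choose_two_add, Fin.val_castSucc, Fin.val_last, Fin.init]
    linarith

open scoped Classical in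
lemma isRDyck_iff {n : ℕ} (w : Fin ((r + 1) * n) → Bool) :
    IsRDyck r n w ↔ IsDyckFrom r 0 (ofFn w) ∧ (ofFn w).count false = n := by
  have hlen : (ofFn w).count true + (ofFn w).count false = r * n + n := by
    rw [count_true_add_count_false, length_ofFn]; ring
  simp only [IsRDyck, IsDyckFrom, forall_prefix_iff_forall_take, card_filter_eq_count,
    card_filter_lt_eq_count_take, add_zero]
  constructor
  · rintro ⟨hn, hpre⟩
    exact ⟨⟨hpre, by rw [hn]; omega⟩, hn⟩
  · rintro ⟨⟨hpre, -⟩, hn⟩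
    exact ⟨hn, hpre⟩

open scoped Classical in
noncomputable def dyckWords (r n : ℕ) : Finset (List Bool) :=
  (univ.filter fun w : Fin ((r + 1) * n) → Bool => IsRDyck r n w).map ⟨ofFn, ofFn_injective⟩

lemma mem_dyckWords {n : ℕ} {l : List Bool} :
    l ∈ dyckWords r n ↔ IsDyckFrom r 0 l ∧ l.count false = n := by
  simp only [dyckWords, Finset.mem_map, Finset.mem_filter, Finset.mem_univ, true_and,
    Function.Embedding.coeFn_mk]
  constructor
  · rintro ⟨w, hw, rfl⟩
    exact (isRDyck_iff w).mp hw
  · rintro ⟨hl, hn⟩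
    have hlen : l.length = (r + 1) * n := by
      rw [← count_true_add_count_false, hl.2, hn]; ring
    obtain ⟨w, rfl⟩ : ∃ w : Fin ((r + 1) * n) → Bool, ofFn w = l :=
      ⟨fun i => l[(i : ℕ)], ext_getElem (by simp [hlen]) (by simp)⟩
    exact ⟨w, (isRDyck_iff w).mpr ⟨hl, hn⟩, rfl⟩

lemma dyckWords_zero : dyckWords r 0 = {[]} := by
  ext l
  rw [mem_dyckWords, Finset.mem_singleton]
  constructor
  · rintro ⟨hl, hn⟩
    rw [← length_eq_zero_iff, ← count_true_add_count_false, hl.2, hn]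
    simp
  · rintro rfl
    exact ⟨⟨by simp, by simp⟩, by simp⟩

def glue (P : Fin (r + 1) → List Bool) : List Bool :=
  false :: body P

lemma sum_dyckWords_succ {M : Type*} [AddCommMonoid M] (f : List Bool → M) (n : ℕ) :
    ∑ l ∈ dyckWords r (n + 1), f l =
      ∑ m ∈ Finset.Nat.antidiagonalTuple (r + 1) n,
        ∑ P ∈ Fintype.piFinset fun i => dyckWords r (m i), f (glue P) := by
  rw [Finset.sum_sigma']
  symm
  refine Finset.sum_nbij (fun x => glue x.2) ?_ ?_ ?_ fun _ _ => rfl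
  · rintro ⟨m, P⟩ hx
    simp only [Finset.mem_sigma, Finset.Nat.mem_antidiagonalTuple, Fintype.mem_piFinset,
      mem_dyckWords] at hx ⊢
    refine ⟨isDyckFrom_false_cons.mpr (isDyckFrom_body fun i => (hx.2 i).1), ?_⟩
    simp [glue, count_false_body, (hx.2 _).2, hx.1]
  · rintro ⟨m, P⟩ hx ⟨m', P'⟩ hx' h
    simp only [Finset.coe_sigma, Set.mem_sigma_iff, Finset.mem_coe, Fintype.mem_piFinset,
      mem_dyckWords] at hx hx'
    have hP : P = P' :=
      eq_of_body_eq (fun i => (hx.2 i).1) (fun i => (hx'.2 i).1) (cons_injective h)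
    have hm : m = m' := funext fun i => by rw [← (hx.2 i).2, ← (hx'.2 i).2, hP]
    subst hP hm
    rfl
  · intro l hl
    obtain ⟨hl, hn⟩ := mem_dyckWords.mp hl
    obtain _ | ⟨_ | _, t⟩ := l
    · simp at hn
    · obtain ⟨P, hP, rfl⟩ := (isDyckFrom_false_cons.mp hl).exists_body_eq
      refine ⟨⟨fun i => (P i).count false, P⟩, ?_, rfl⟩
      simpa [Finset.Nat.mem_antidiagonalTuple, mem_dyckWords, count_false_body, hP] using hn
    · exact absurd hl (not_isDyckFrom_zero_true_cons t)

/-- The number of unit squares between `l` and the lowest path `(0 1^r)^n`, `n = l.count false`;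
the subtraction is exact by `inversions_le`. -/
def area (r : ℕ) (l : List Bool) : ℕ :=
  r * (l.count false).choose 2 - inversions l

lemma area_glue {P : Fin (r + 1) → List Bool} (hP : ∀ i, IsDyckFrom r 0 (P i)) :
    area r (glue P) = ∑ i, area r (P i) + ∑ i : Fin (r + 1), (i : ℕ) * (P i).count false := by
  have hinv := inversions_body (k := r) (Q := P) fun i => by simpa using (hP i).2
  have hle : ∀ i ∈ univ, inversions (P i) ≤ r * ((P i).count false).choose 2 :=
    fun i _ => inversions_le (hP i).1
  have hsum_le := Finset.sum_le_sum hle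
  simp only [area, glue, inversions_cons, count_cons_self, count_false_body, succ_choose_two,
    Finset.sum_tsub_distrib _ hle]
  simp only [Nat.mul_add, Bool.false_eq_true, if_false, zero_add] at hinv ⊢
  omega

theorem fussCarlitz_eq_sum_area (r n : ℕ) :
    fussCarlitz r n = ∑ l ∈ dyckWords r n, X ^ area r l := by
  induction n using Nat.strong_induction_on with
  | _ n ih =>
    cases n with
    | zero => simp [fussCarlitz, dyckWords_zero, area]
    | succ n =>
      rw [fussCarlitz, Finset.sum_attach (Finset.Nat.antidiagonalTuple (r + 1) n)
        fun m => (∏ i, fussCarlitz r (m i)) * X ^ ∑ i : Fin (r + 1), (i : ℕ) * m i,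
        sum_dyckWords_succ]
      refine sum_congr rfl fun m hm => ?_
      have hle : ∀ i, m i < n + 1 := fun i => Nat.lt_succ_of_le <|
        (Finset.Nat.mem_antidiagonalTuple.mp hm) ▸
          single_le_sum (fun _ _ => Nat.zero_le _) (mem_univ i)
      rw [prod_congr rfl fun i _ => ih (m i) (hle i), prod_univ_sum, sum_mul]
      refine sum_congr rfl fun P hP => ?_
      simp only [Fintype.mem_piFinset, mem_dyckWords] at hP
      rw [area_glue fun i => (hP i).1, pow_add, prod_pow_eq_pow_sum]
      simp only [(hP _).2]

lemma revAt_sum {ι : Type*} (s : Finset ι) (D : ℕ) (f : ι → ℕ[X]) :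
    revAt D (∑ i ∈ s, f i) = ∑ i ∈ s, revAt D (f i) := by
  simp only [_root_.revAt, finsetSum_coeff, map_sum, sum_mul]
  exact sum_comm

lemma revAt_X_pow {D j : ℕ} (h : j ≤ D) : revAt D (X ^ j) = X ^ (D - j) := by
  rw [_root_.revAt, sum_eq_single (D - j)]
  · simp [coeff_X_pow, Nat.sub_sub_self h]
  · intro i hi hne
    simp only [Finset.mem_range] at hi
    simp [coeff_X_pow]
    omega
  · simp

end RDyck

open scoped Classical in
theorem iInv_gen_rDyck_eq_fussCarlitz_general (r n : ℕ) :
    (∑ w ∈ univ.filter (fun w : Fin ((r + 1) * n) → Bool => IsRDyck r n w),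
      (X : Polynomial ℕ) ^ iInv w) = revAt (r * n.choose 2) (fussCarlitz r n) := by
  rw [RDyck.fussCarlitz_eq_sum_area, RDyck.revAt_sum, RDyck.dyckWords, sum_map]
  refine sum_congr rfl fun w hw => ?_
  obtain ⟨hl, hn⟩ := (RDyck.isRDyck_iff w).mp (mem_filter.mp hw).2
  have hle := RDyck.inversions_le hl.1
  rw [hn] at hle
  rw [Function.Embedding.coeFn_mk, RDyck.area, hn, RDyck.revAt_X_pow (Nat.sub_le _ _),
    Nat.sub_sub_self hle, RDyck.iInv_eq_inversions_ofFn]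

open scoped Classical in
/-- `∑_{μ ∈ P^r_n} q^{iInv μ} = C_n^{(r)}(q) = q^{r·binom(n,2)} C'_n(q^{-1})`,
where `C'_n` satisfies the recurrence of `fussCarlitz`. -/
theorem iInv_gen_rDyck_eq_fussCarlitz (r n : ℕ) (hr : 1 ≤ r) :
    (∑ w ∈ univ.filter (fun w : Fin ((r + 1) * n) → Bool => IsRDyck r n w),
      (X : Polynomial ℕ) ^ iInv w) = revAt (r * n.choose 2) (fussCarlitz r n) :=
  iInv_gen_rDyck_eq_fussCarlitz_general r n
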